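/- For every admissible linear chain A there exists a unique admissible linear chain A* (the adjoint) with e(A*) = 1 - e(A^T); it satisfies A** = A and (A^T)* = (A*)^T. -/

import Mathlib

/-- The tridiagonal matrix of a linear chain: diagonal entries from the list,
entries `-1` on the first sub- and super-diagonals, `0` elsewhere. -/
def chainMatrix (l : List ℤ) : Matrix (Fin l.length) (Fin l.length) ℤ :=
  fun i j =>
    if i = j then l.get i
    else if (i : ℕ) + 1 = (j : ℕ) ∨ (j : ℕ) + 1 = (i : ℕ) then -1 else 0

/-- The discriminant of a linear chain. -/
def disc (l : List ℤ) : ℤ := (chainMatrix l).det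

/-- A linear chain is admissible if it is nonempty and all entries are ≥ 2. -/
def Admissible (l : List ℤ) : Prop := l ≠ [] ∧ ∀ a ∈ l, 2 ≤ a

/-- The inductance of a chain. -/
def ind (l : List ℤ) : ℚ := (disc l.tail : ℚ) / (disc l : ℚ)

/-- `B` is the adjoint of `A`. -/
def IsAdjoint (A B : List ℤ) : Prop := Admissible B ∧ ind B = 1 - ind A.reverse

/-!
Put `p = disc A`, `u = disc A.tail` and `v = disc Aᵀ.tail = disc A.dropLast`. The continuant
identity gives `u v ≡ 1 (mod p)`, so `ind A = u / p` and `ind Aᵀ = v / p` are in lowest terms.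
Existence and uniqueness of the adjoint is the bijectivity of `ind` onto `ℚ ∩ (0, 1)`: `ind A` is
the Hirzebruch–Jung continued fraction of `A`, whose entries are recovered by `a = ⌈1 / q⌉`.
If `ind B = 1 - v / p = (p - v) / p` then `disc B = p` and `disc B.tail = p - v`, so
`disc Bᵀ.tail` is an inverse of `-v` modulo `p` lying in `(0, p)`, i.e. it equals `p - u`.
Hence `ind Bᵀ = 1 - ind A`, which gives both `B* = A` and `(Aᵀ)* = Bᵀ`.
-/

-- `chainMatrix` with diagonal `d 0, …, d (n - 1)`; indexing by `ℕ` keeps minors and shifts simple.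
def tridiag (d : ℕ → ℤ) (n : ℕ) : Matrix (Fin n) (Fin n) ℤ :=
  fun i j => if (i : ℕ) = j then d i
    else if (i : ℕ) + 1 = j ∨ (j : ℕ) + 1 = i then -1 else 0

namespace tridiag

theorem congr_of_lt {d d' : ℕ → ℤ} {n : ℕ} (h : ∀ k < n, d k = d' k) :
    tridiag d n = tridiag d' n := by
  ext i j
  simp only [tridiag, h i i.isLt]

theorem submatrix_shift (d : ℕ → ℤ) (k : ℕ) {m n : ℕ} (f g : Fin m → Fin n)
    (hf : ∀ i, (f i : ℕ) = i + k) (hg : ∀ j, (g j : ℕ) = j + k) :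
    (tridiag d n).submatrix f g = tridiag (fun i => d (i + k)) m := by
  ext i j
  simp only [Matrix.submatrix_apply, tridiag, hf, hg]
  grind

theorem submatrix_rev (d : ℕ → ℤ) (n : ℕ) :
    (tridiag d n).submatrix Fin.rev Fin.rev = tridiag (fun k => d (n - 1 - k)) n := by
  ext i j
  simp only [Matrix.submatrix_apply, tridiag, Fin.val_rev]
  grind

theorem det_succ_succ (d : ℕ → ℤ) (n : ℕ) :
    (tridiag d (n + 2)).det =
      d 0 * (tridiag (fun k => d (k + 1)) (n + 1)).det - (tridiag (fun k => d (k + 2)) n).det := by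
  set M := tridiag d (n + 2)
  have hM00 : M 0 0 = d 0 := rfl
  have hM01 : M 0 1 = -1 := rfl
  have hM0 : ∀ j : Fin n, M 0 j.succ.succ = 0 := fun j => by
    simp [M, tridiag]
  have hminor0 : M.submatrix Fin.succ (Fin.succAbove 0) = tridiag (fun k => d (k + 1)) (n + 1) :=
    submatrix_shift d 1 _ _ (fun _ => rfl) (fun _ => rfl)
  set N := M.submatrix Fin.succ (Fin.succAbove 1)
  have hN00 : N 0 0 = -1 := rfl
  have hN0 : ∀ i : Fin n, N i.succ 0 = 0 := fun i => by
    simp [N, M, tridiag]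
  have hminor1 : N.submatrix (Fin.succAbove 0) Fin.succ = tridiag (fun k => d (k + 2)) n :=
    submatrix_shift d 2 _ _ (fun _ => rfl) (fun j => by simp [Fin.succAbove, Fin.lt_def])
  have hN : N.det = -(tridiag (fun k => d (k + 2)) n).det := by
    rw [Matrix.det_succ_column_zero, Fin.sum_univ_succ, hN00, hminor1]
    simp [hN0]
  rw [Matrix.det_succ_row_zero, Fin.sum_univ_succ, Fin.sum_univ_succ]
  simp only [hM0, mul_zero, zero_mul, Finset.sum_const_zero, add_zero]
  rw [hM00, hminor0, Fin.succ_zero_eq_one, hM01, hN]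
  simp [sub_eq_add_neg]

end tridiag

theorem disc_eq_det_tridiag (l : List ℤ) :
    disc l = (tridiag (fun k => l.getD k 0) l.length).det := by
  rw [disc]
  congr 1
  ext i j
  simp [chainMatrix, tridiag, Fin.ext_iff]

@[simp] theorem disc_nil : disc [] = 1 := Matrix.det_fin_zero

@[simp] theorem disc_singleton (a : ℤ) : disc [a] = a := by
  simp [disc_eq_det_tridiag, tridiag]

theorem disc_cons_cons (a b : ℤ) (t : List ℤ) :
    disc (a :: b :: t) = a * disc (b :: t) - disc t := by
  simp only [disc_eq_det_tridiag, List.length_cons, tridiag.det_succ_succ, List.getD_cons_succ,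
    List.getD_cons_zero]

theorem disc_reverse (l : List ℤ) : disc l.reverse = disc l := by
  rw [disc_eq_det_tridiag, disc_eq_det_tridiag, List.length_reverse,
    tridiag.congr_of_lt (fun k hk => congrFun (List.getD_reverse k hk) 0),
    ← tridiag.submatrix_rev (fun k => l.getD k 0)]
  exact Matrix.det_submatrix_equiv_self Fin.revPerm _

theorem Admissible.reverse {l : List ℤ} (h : Admissible l) : Admissible l.reverse :=
  ⟨List.reverse_ne_nil_iff.2 h.1, fun a ha => h.2 a (List.mem_reverse.1 ha)⟩

theorem Admissible.of_cons {a : ℤ} {l : List ℤ} (h : Admissible (a :: l)) (hl : l ≠ []) :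
    Admissible l :=
  ⟨hl, fun x hx => h.2 x (List.mem_cons_of_mem a hx)⟩

theorem Admissible.disc_tail_mem_Ioo :
    ∀ {l : List ℤ}, Admissible l → disc l.tail ∈ Set.Ioo 0 (disc l)
  | [], h => absurd rfl h.1
  | [a], h => by
    have ha := h.2 a (by simp)
    simp only [List.tail_cons, disc_nil, disc_singleton, Set.mem_Ioo]
    omega
  | a :: b :: t, h => by
    have hbt : Admissible (b :: t) := h.of_cons (List.cons_ne_nil b t)
    have ha : 2 ≤ a := h.2 a (by simp)
    obtain ⟨h0, h1⟩ := hbt.disc_tail_mem_Ioo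
    rw [List.tail_cons] at h0 h1 ⊢
    rw [disc_cons_cons]
    constructor <;> nlinarith

theorem Admissible.disc_pos {l : List ℤ} (h : Admissible l) : 0 < disc l :=
  h.disc_tail_mem_Ioo.1.trans h.disc_tail_mem_Ioo.2

theorem disc_append_mul_disc_cons_sub (b : ℤ) (m : List ℤ) (a : ℤ) :
    disc (m ++ [b]) * disc (a :: m) - disc (a :: (m ++ [b])) * disc m = 1 := by
  induction m generalizing a with
  | nil =>
    simp only [List.nil_append, disc_cons_cons, disc_singleton, disc_nil]
    ring
  | cons c m ih =>
    simp only [List.cons_append, disc_cons_cons]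
    linear_combination ih c

theorem disc_tail_mul_disc_reverse_tail_modEq {l : List ℤ} (hl : l ≠ []) :
    disc l.tail * disc l.reverse.tail ≡ 1 [ZMOD disc l] := by
  obtain ⟨a, l, rfl⟩ := List.exists_cons_of_ne_nil hl
  rcases l.eq_nil_or_concat with rfl | ⟨m, b, rfl⟩
  · simp [Int.ModEq.refl]
  · have hrev : (a :: m.concat b).reverse.tail = (a :: m).reverse := by simp
    rw [hrev, disc_reverse, List.tail_cons, List.concat_eq_append, Int.modEq_iff_dvd]
    exact ⟨-disc m, by linear_combination -disc_append_mul_disc_cons_sub b m a⟩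

theorem isCoprime_disc_tail_disc {l : List ℤ} (hl : l ≠ []) : IsCoprime (disc l.tail) (disc l) := by
  obtain ⟨k, hk⟩ := (disc_tail_mul_disc_reverse_tail_modEq hl).symm.dvd
  exact ⟨disc l.reverse.tail, -k, by linear_combination hk⟩

theorem Int.eq_of_mul_modEq_one {n a b c : ℤ} (ha : a * c ≡ 1 [ZMOD n]) (hb : b * c ≡ 1 [ZMOD n])
    (ha' : a ∈ Set.Ico 0 n) (hb' : b ∈ Set.Ico 0 n) : a = b := by
  have hab : a ≡ b [ZMOD n] :=
    calc a = a * 1 := (mul_one a).symm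
      _ ≡ a * (b * c) [ZMOD n] := hb.symm.mul_left a
      _ = b * (a * c) := by ring
      _ ≡ b * 1 [ZMOD n] := ha.mul_left b
      _ = b := mul_one b
  have := hab.eq
  rwa [Int.emod_eq_of_lt ha'.1 ha'.2, Int.emod_eq_of_lt hb'.1 hb'.2] at this

/-- The Hirzebruch–Jung continued fraction `1 / (a₁ - 1 / (a₂ - ⋯ - 1 / aₙ))`. -/
def hjFrac : List ℤ → ℚ
  | [] => 0
  | a :: t => ((a : ℚ) - hjFrac t)⁻¹

theorem hjFrac_mem_Ico : ∀ {l : List ℤ}, (∀ a ∈ l, 2 ≤ a) → hjFrac l ∈ Set.Ico 0 1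
  | [], _ => by simp [hjFrac]
  | a :: t, h => by
    have ht := hjFrac_mem_Ico (l := t) fun x hx => h x (by simp [hx])
    have ha : (2 : ℚ) ≤ a := by exact_mod_cast h a (by simp)
    have hgt : 1 < (a : ℚ) - hjFrac t := by linarith [ht.2]
    exact ⟨(inv_pos.2 (by linarith)).le, inv_lt_one_of_one_lt₀ hgt⟩

theorem hjFrac_eq_zero_iff {l : List ℤ} (h : ∀ a ∈ l, 2 ≤ a) : hjFrac l = 0 ↔ l = [] := by
  refine ⟨fun h0 => ?_, fun hl => hl ▸ rfl⟩
  obtain _ | ⟨a, t⟩ := l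
  · rfl
  · have ht := hjFrac_mem_Ico (l := t) fun x hx => h x (by simp [hx])
    have ha : (2 : ℚ) ≤ a := by exact_mod_cast h a (by simp)
    exact absurd h0 (inv_ne_zero (by linarith [ht.2]))

theorem ceil_inv_hjFrac_cons (a : ℤ) {t : List ℤ} (ht : ∀ x ∈ t, 2 ≤ x) :
    ⌈(hjFrac (a :: t))⁻¹⌉ = a := by
  have := hjFrac_mem_Ico ht
  rw [hjFrac, inv_inv, Int.ceil_eq_iff]
  constructor <;> linarith [this.1, this.2]

theorem eq_of_hjFrac_eq : ∀ {l m : List ℤ}, (∀ a ∈ l, 2 ≤ a) → (∀ a ∈ m, 2 ≤ a) →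
    hjFrac l = hjFrac m → l = m
  | [], m, _, hm, h => ((hjFrac_eq_zero_iff hm).1 h.symm).symm
  | a :: s, m, hl, hm, h => by
    obtain _ | ⟨b, t⟩ := m
    · exact (hjFrac_eq_zero_iff hl).1 h
    have hs : ∀ x ∈ s, 2 ≤ x := fun x hx => hl x (by simp [hx])
    have ht : ∀ x ∈ t, 2 ≤ x := fun x hx => hm x (by simp [hx])
    have hab : a = b := by rw [← ceil_inv_hjFrac_cons a hs, h, ceil_inv_hjFrac_cons b ht]
    subst hab
    have hst : hjFrac s = hjFrac t := by simpa [hjFrac] using h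
    rw [eq_of_hjFrac_eq hs ht hst]

theorem exists_hjFrac_eq {q : ℚ} (hq : q ∈ Set.Ico 0 1) :
    ∃ l : List ℤ, (∀ a ∈ l, 2 ≤ a) ∧ hjFrac l = q := by
  induction hn : q.num.natAbs using Nat.strong_induction_on generalizing q with
  | _ n ih =>
    rcases hq.1.eq_or_lt with rfl | hq0
    · exact ⟨[], by simp, rfl⟩
    set a := ⌈q⁻¹⌉
    set r := (a : ℚ) - q⁻¹ with hr
    have hr' : r ∈ Set.Ico 0 1 :=
      ⟨sub_nonneg.2 (Int.le_ceil _), by linarith [Int.ceil_lt_add_one q⁻¹]⟩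
    have ha : 2 ≤ a := Int.lt_ceil.2 (by exact_mod_cast one_lt_inv₀ hq0 |>.2 hq.2)
    -- `r` has denominator `q.num`, so its numerator is smaller than that of `q`
    have hnum : r.num.natAbs < n := by
      have hden : (r.den : ℤ) = q.num := by
        rw [hr, Rat.intCast_sub_den, Rat.den_inv_of_ne_zero hq0.ne',
          Int.natAbs_of_nonneg (Rat.num_nonneg.2 hq.1)]
      rw [← hn]
      have := Rat.num_lt_denom_iff.2 hr'.2
      have := Rat.num_nonneg.2 hr'.1
      omega
    obtain ⟨l, hl, hlr⟩ := ih _ hnum hr' rfl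
    refine ⟨a :: l, fun x hx => ?_, by simp [hjFrac, hlr, hr]⟩
    rcases List.mem_cons.1 hx with rfl | hx
    exacts [ha, hl x hx]

theorem Admissible.ind_eq_hjFrac : ∀ {l : List ℤ}, Admissible l → ind l = hjFrac l
  | [], h => absurd rfl h.1
  | [a], _ => by simp [ind, hjFrac]
  | a :: b :: t, h => by
    have hbt : Admissible (b :: t) := h.of_cons (List.cons_ne_nil b t)
    have hpos : (0 : ℚ) < disc (b :: t) := by exact_mod_cast hbt.disc_pos
    rw [hjFrac, ← hbt.ind_eq_hjFrac, ind, ind, List.tail_cons, List.tail_cons, disc_cons_cons]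
    push_cast
    field_simp

theorem Admissible.ind_mem_Ioo {l : List ℤ} (h : Admissible l) : ind l ∈ Set.Ioo 0 1 := by
  obtain ⟨h0, h1⟩ := h.disc_tail_mem_Ioo
  have hpos : (0 : ℚ) < disc l := by exact_mod_cast h.disc_pos
  exact ⟨div_pos (by exact_mod_cast h0) hpos, (div_lt_one hpos).2 (by exact_mod_cast h1)⟩

theorem eq_of_ind_eq {A B : List ℤ} (hA : Admissible A) (hB : Admissible B) (h : ind A = ind B) :
    A = B :=
  eq_of_hjFrac_eq hA.2 hB.2 (by rwa [← hA.ind_eq_hjFrac, ← hB.ind_eq_hjFrac])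

theorem exists_admissible_ind_eq {q : ℚ} (hq : q ∈ Set.Ioo 0 1) :
    ∃ A, Admissible A ∧ ind A = q := by
  obtain ⟨A, hA, rfl⟩ := exists_hjFrac_eq ⟨hq.1.le, hq.2⟩
  have hne : A ≠ [] := fun h => hq.1.ne' ((hjFrac_eq_zero_iff hA).2 h)
  exact ⟨A, ⟨hne, hA⟩, Admissible.ind_eq_hjFrac ⟨hne, hA⟩⟩

theorem IsAdjoint.ind_reverse {A B : List ℤ} (hA : Admissible A) (h : IsAdjoint A B) :
    ind B.reverse = 1 - ind A := by
  obtain ⟨hB, hBA⟩ := h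
  set p := disc A
  set u := disc A.tail
  set v := disc A.reverse.tail
  set V := disc B.reverse.tail
  have hindA : ind A = u / p := rfl
  have hindAr : ind A.reverse = v / p := by rw [ind, disc_reverse]
  have hindBr : ind B.reverse = V / disc B := by rw [ind, disc_reverse]
  have hp : (p : ℚ) ≠ 0 := by exact_mod_cast hA.disc_pos.ne'
  -- `ind B = (p - v) / p` and both sides are fractions in lowest terms
  obtain ⟨hBtail, hBdisc⟩ : disc B.tail = p - v ∧ disc B = p := by
    have hcop : IsCoprime (p - v) p := by
      obtain ⟨x, y, hxy⟩ := isCoprime_disc_tail_disc hA.reverse.1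
      rw [disc_reverse] at hxy
      exact ⟨-x, y + x, by linear_combination hxy⟩
    refine Rat.div_int_inj hB.disc_pos hA.disc_pos
      (Int.isCoprime_iff_nat_coprime.1 (isCoprime_disc_tail_disc hB.1))
      (Int.isCoprime_iff_nat_coprime.1 hcop) ?_
    rw [← ind, hBA, hindAr]
    push_cast
    field_simp
  have huv : u * v ≡ 1 [ZMOD p] := disc_tail_mul_disc_reverse_tail_modEq hA.1
  have hVv : (p - V) * v ≡ 1 [ZMOD p] := by
    have hV := disc_tail_mul_disc_reverse_tail_modEq hB.1
    rw [hBtail, hBdisc] at hV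
    exact (Int.modEq_iff_dvd.2 ⟨V - v, by ring⟩).trans hV
  obtain ⟨hu0, hup⟩ := hA.disc_tail_mem_Ioo
  obtain ⟨hV0, hVp⟩ := hB.reverse.disc_tail_mem_Ioo
  rw [disc_reverse, hBdisc] at hVp
  have huV : u = p - V := Int.eq_of_mul_modEq_one huv hVv ⟨hu0.le, hup⟩ ⟨by omega, by omega⟩
  rw [hindBr, hindA, hBdisc, huV, Int.cast_sub, sub_div, div_self hp, sub_sub_cancel]

theorem adjoint_exists_unique (A : List ℤ) (hA : Admissible A) :
    (∃! B, IsAdjoint A B) ∧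
    (∀ B, IsAdjoint A B → IsAdjoint B A) ∧
    (∀ B, IsAdjoint A B → IsAdjoint A.reverse B.reverse) := by
  obtain ⟨h0, h1⟩ := hA.reverse.ind_mem_Ioo
  obtain ⟨B, hB, hBind⟩ :=
    exists_admissible_ind_eq (q := 1 - ind A.reverse) ⟨by linarith, by linarith⟩
  refine ⟨⟨B, ⟨hB, hBind⟩, fun C hC => eq_of_ind_eq hC.1 hB (hC.2.trans hBind.symm)⟩,
    fun C hC => ⟨hA, ?_⟩, fun C hC => ⟨hC.1.reverse, ?_⟩⟩
  · rw [hC.ind_reverse hA]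
    ring
  · rw [List.reverse_reverse]
    exact hC.ind_reverse hA
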